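/- Let K be a finite index set, C > 0, d : K → ℂ with Re d_k ≥ 0, Im d_k ≥ 0 and |d_k| ≤ C for every k ∈ K, and v : K → ℝ with v_k > 0 for every k. Define OPT₁ as the maximum of Σ_{k∈S₁} v_k over all S₁ ⊆ K with Re(Σ_{k∈S₁} d_k) + Im(Σ_{k∈S₁} d_k) ≤ C, and define V₂ as the maximum of v_k over all k ∈ K with Re d_k + Im d_k > C (with V₂ = 0 if no such k exists). Then for every S ⊆ K with |Σ_{k∈S} d_k| ≤ C, one has Σ_{k∈S} v_k ≤ OPT₁ + max(OPT₁, V₂). -/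

import Mathlib

/-!
Put `w k = Re d_k + Im d_k`; feasibility of `S` gives `w(S) ≤ √2 ‖Σ_S d_k‖ ≤ 3C/2`. Take `T ⊆ S`
inclusion-maximal with `w(T) ≤ C`. If also `w(S \ T) ≤ C`, both parts are bounded by `OPT₁`.
Otherwise `w(T) < C/2`, so by maximality every `k ∈ S \ T` has `w_k > C/2`, whence
`w(S \ {k}) < C`; the single item `k` is bounded by `OPT₁` or by `V₂` according as `w_k ≤ C`.
-/

open Finset

theorem Complex.re_add_im_le_sqrt_two_mul_norm (z : ℂ) : z.re + z.im ≤ √2 * ‖z‖ := by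
  have hsq : (z.re + z.im) ^ 2 ≤ (√2 * ‖z‖) ^ 2 := by
    rw [mul_pow, Real.sq_sqrt zero_le_two, Complex.sq_norm, Complex.normSq_apply]
    nlinarith [sq_nonneg (z.re - z.im)]
  exact (abs_le_of_sq_le_sq' hsq (by positivity)).2

theorem bddAbove_setOf_exists_and_eq {ι α : Type*} [Finite ι] [Lattice α] [Nonempty α]
    (P : ι → Prop) (f : ι → α) : BddAbove {x | ∃ i, P i ∧ x = f i} :=
  ((Set.finite_range f).subset <| by rintro _ ⟨i, -, rfl⟩; exact Set.mem_range_self i).bddAbove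

namespace Finset

variable {ι : Type*} [DecidableEq ι]

theorem exists_subset_sum_le_forall_lt_sum_add (S : Finset ι) (w : ι → ℝ) {C : ℝ}
    (hC : 0 ≤ C) : ∃ T ⊆ S, ∑ k ∈ T, w k ≤ C ∧ ∀ k ∈ S \ T, C < ∑ j ∈ T, w j + w k := by
  obtain ⟨T, hT, hmax⟩ :=
    (S.powerset.filter fun T => ∑ k ∈ T, w k ≤ C).exists_maximal ⟨∅, by simp [hC]⟩
  simp only [mem_filter, mem_powerset] at hT hmax
  refine ⟨T, hT.1, hT.2, fun k hk => lt_of_not_ge fun hle => ?_⟩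
  obtain ⟨hkS, hkT⟩ := mem_sdiff.1 hk
  have hins : insert k T ⊆ T :=
    hmax ⟨insert_subset hkS hT.1, by rwa [sum_insert hkT, add_comm]⟩ (subset_insert k T)
  exact hkT (hins (mem_insert_self k T))

theorem exists_two_bins_or_large_item_of_sum_le {S : Finset ι} {w : ι → ℝ} {C : ℝ} (hC : 0 ≤ C)
    (hS : ∑ k ∈ S, w k ≤ 3 / 2 * C) :
    (∃ T ⊆ S, ∑ k ∈ T, w k ≤ C ∧ ∑ k ∈ S \ T, w k ≤ C) ∨
      ∃ k ∈ S, C < w k ∧ ∑ j ∈ S.erase k, w j ≤ C := by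
  obtain ⟨T, hTS, hT, hmax⟩ := S.exists_subset_sum_le_forall_lt_sum_add w hC
  rcases le_or_gt (∑ k ∈ S \ T, w k) C with hrest | hrest
  · exact .inl ⟨T, hTS, hT, hrest⟩
  obtain ⟨k, hk⟩ : (S \ T).Nonempty :=
    nonempty_of_sum_ne_zero (by linarith : ∑ k ∈ S \ T, w k ≠ 0)
  have hkS := (mem_sdiff.1 hk).1
  have hsplit : ∑ j ∈ S \ T, w j + ∑ j ∈ T, w j = ∑ j ∈ S, w j := sum_sdiff hTS
  have herase : w k + ∑ j ∈ S.erase k, w j = ∑ j ∈ S, w j := add_sum_erase S w hkS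
  have herase_le : ∑ j ∈ S.erase k, w j ≤ C := by linarith [hmax k hk]
  by_cases hkC : w k ≤ C
  · refine .inl ⟨{k}, singleton_subset_iff.2 hkS, by simpa using hkC, ?_⟩
    rwa [sdiff_singleton_eq_erase]
  · exact .inr ⟨k, hkS, lt_of_not_ge hkC, herase_le⟩

end Finset

theorem ckp_value_bound_general {K : Type*} [Fintype K] (C : ℝ)
    (d : K → ℂ)
    (v : K → ℝ)
    (OPT₁ V₂ : ℝ)
    (hOPT₁ : OPT₁ = sSup {x : ℝ | ∃ S₁ : Finset K,
      (∑ k ∈ S₁, d k).re + (∑ k ∈ S₁, d k).im ≤ C ∧ x = ∑ k ∈ S₁, v k})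
    (hV₂ : V₂ = sSup (insert 0 {x : ℝ | ∃ k : K, C < (d k).re + (d k).im ∧ x = v k}))
    (S : Finset K) (hS : ‖∑ k ∈ S, d k‖ ≤ C) :
    ∑ k ∈ S, v k ≤ OPT₁ + max OPT₁ V₂ := by
  classical
  set w : K → ℝ := fun k => (d k).re + (d k).im
  have hsum (T : Finset K) : (∑ k ∈ T, d k).re + (∑ k ∈ T, d k).im = ∑ k ∈ T, w k := by
    simp [w, Complex.re_sum, Complex.im_sum, sum_add_distrib]
  have hOPT (T : Finset K) (hT : ∑ k ∈ T, w k ≤ C) : ∑ k ∈ T, v k ≤ OPT₁ :=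
    hOPT₁ ▸ le_csSup (bddAbove_setOf_exists_and_eq _ _) ⟨T, (hsum T).trans_le hT, rfl⟩
  have hV (k : K) (hk : C < w k) : v k ≤ V₂ :=
    hV₂ ▸ le_csSup ((bddAbove_setOf_exists_and_eq _ _).insert 0)
      (Set.mem_insert_of_mem _ ⟨k, hk, rfl⟩)
  have hW : ∑ k ∈ S, w k ≤ 3 / 2 * C :=
    calc ∑ k ∈ S, w k = (∑ k ∈ S, d k).re + (∑ k ∈ S, d k).im := (hsum S).symm
      _ ≤ √2 * ‖∑ k ∈ S, d k‖ := Complex.re_add_im_le_sqrt_two_mul_norm _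
      _ ≤ 3 / 2 * C := mul_le_mul Real.sqrt_two_lt_three_halves.le hS (norm_nonneg _) (by norm_num)
  have hC : 0 ≤ C := (norm_nonneg _).trans hS
  rcases exists_two_bins_or_large_item_of_sum_le hC hW with
    ⟨T, hTS, hT, hST⟩ | ⟨k, hkS, hk, hrest⟩
  · rw [← sum_sdiff hTS]
    linarith [hOPT _ hST, hOPT _ hT, le_max_left OPT₁ V₂]
  · rw [← add_sum_erase S v hkS]
    linarith [hOPT _ hrest, hV k hk, le_max_right OPT₁ V₂]

/-- The combinatorial core of the case analysis in Theorem 2: for any feasible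
C-KP solution `S`, its value is at most `OPT₁ + max OPT₁ V₂`, where `OPT₁` is
the optimal value over solutions whose demand sum lies in the triangle `D₁`,
and `V₂` is the best value of a single item whose demand lies in `D₂`
(zero if there is none). -/
theorem ckp_value_bound {K : Type*} [Fintype K] (C : ℝ) (hC : 0 < C)
    (d : K → ℂ) (hre : ∀ k, 0 ≤ (d k).re) (him : ∀ k, 0 ≤ (d k).im)
    (hmag : ∀ k, ‖d k‖ ≤ C)
    (v : K → ℝ) (hv : ∀ k, 0 < v k)
    (OPT₁ V₂ : ℝ)
    (hOPT₁ : OPT₁ = sSup {x : ℝ | ∃ S₁ : Finset K,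
      (∑ k ∈ S₁, d k).re + (∑ k ∈ S₁, d k).im ≤ C ∧ x = ∑ k ∈ S₁, v k})
    (hV₂ : V₂ = sSup (insert 0 {x : ℝ | ∃ k : K, C < (d k).re + (d k).im ∧ x = v k}))
    (S : Finset K) (hS : ‖∑ k ∈ S, d k‖ ≤ C) :
    ∑ k ∈ S, v k ≤ OPT₁ + max OPT₁ V₂ :=
  ckp_value_bound_general C d v OPT₁ V₂ hOPT₁ hV₂ S hS
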